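/- arXiv:2103.10713 — 2 statements merged into one kernel-verified Lean document; each statement's English description precedes it below -/
import Mathlib

section
/- Let m ≤ n with m, n ≥ 2, and let G be any graph on m vertices without isolated vertices. Then d_t(G □ K_n) = d(G □ K_n) = n. In particular d_t(K_m □ K_n) = d(K_m □ K_n) = max{m,n}. -/
open SimpleGraph Finset

/-- A domatic `k`-coloring: every vertex sees all `k` colors in its closed neighborhood. -/
def IsDomaticColoring {V : Type*} (G : SimpleGraph V) (k : ℕ) (f : V → Fin k) : Prop :=
  ∀ v : V, ∀ c : Fin k, ∃ u : V, (u = v ∨ G.Adj v u) ∧ f u = c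

/-- A total domatic `k`-coloring: every vertex sees all `k` colors in its open neighborhood. -/
def IsTotalDomaticColoring {V : Type*} (G : SimpleGraph V) (k : ℕ) (f : V → Fin k) : Prop :=
  ∀ v : V, ∀ c : Fin k, ∃ u : V, G.Adj v u ∧ f u = c

/-- The domatic number `d(G)`. -/
noncomputable def domaticNumber {V : Type*} (G : SimpleGraph V) : ℕ :=
  sSup {k | ∃ f : V → Fin k, IsDomaticColoring G k f}

/-- The total domatic number `d_t(G)`. -/
noncomputable def totalDomaticNumber {V : Type*} (G : SimpleGraph V) : ℕ :=
  sSup {k | ∃ f : V → Fin k, IsTotalDomaticColoring G k f}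

def IsDominatingSet {V : Type*} (G : SimpleGraph V) (D : Set V) : Prop :=
  ∀ v : V, v ∈ D ∨ ∃ u ∈ D, G.Adj v u

def IsTotalDominatingSet {V : Type*} (G : SimpleGraph V) (D : Set V) : Prop :=
  ∀ v : V, ∃ u ∈ D, G.Adj v u

noncomputable def dominationNumber {V : Type*} (G : SimpleGraph V) [Fintype V] : ℕ :=
  sInf {n | ∃ D : Finset V, D.card = n ∧ IsDominatingSet G ↑D}

noncomputable def totalDominationNumber {V : Type*} (G : SimpleGraph V) [Fintype V] : ℕ :=
  sInf {n | ∃ D : Finset V, D.card = n ∧ IsTotalDominatingSet G ↑D}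

/-- An injective `k`-coloring: vertices with a common neighbor get distinct colors. -/
def IsInjectiveColoring {V : Type*} (G : SimpleGraph V) (k : ℕ) (f : V → Fin k) : Prop :=
  ∀ u w v : V, G.Adj v u → G.Adj v w → u ≠ w → f u ≠ f w

noncomputable def injChromaticNumber {V : Type*} (G : SimpleGraph V) : ℕ :=
  sInf {k | ∃ f : V → Fin k, IsInjectiveColoring G k f}

def NoIsolated {V : Type*} (G : SimpleGraph V) : Prop := ∀ v : V, ∃ u, G.Adj v u

/-- The Hamming graph `H(n,q)`: vertices differ in exactly one coordinate. -/
def hammingGraph (n q : ℕ) : SimpleGraph (Fin n → Fin q) :=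
  SimpleGraph.fromRel (fun x y => ∃ i, x i ≠ y i ∧ ∀ j, j ≠ i → x j = y j)

/-- The hypercube `Q n`. -/
def hypercube (n : ℕ) : SimpleGraph (Fin n → Fin 2) := hammingGraph n 2

/-- The torus `C_{k 0} □ ⋯ □ C_{k (d-1)}`. -/
def torusGraph (d : ℕ) (k : Fin d → ℕ) : SimpleGraph (∀ i : Fin d, ZMod (k i)) :=
  SimpleGraph.fromRel (fun x y => ∃ i, x i = y i + 1 ∧ ∀ j, j ≠ i → x j = y j)

/-!
A dominating set of `G □ K_n` either meets every copy `G × {w}` of `G`, so it has at least `n`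
vertices, or misses some `G × {w}`; then every `(v, w)` must be dominated inside its `K_n`-fibre
`{v} × K_n`, so the set meets all `|V(G)|` fibres. For `|V(G)| ≤ n` the `k` classes of a domatic
colouring are disjoint dominating sets of size at least `|V(G)|` among `|V(G)| n` vertices, so
`k ≤ n`, and the same bound holds for total domatic colourings. Conversely, colouring `(v, i)` by
`i` is a total domatic colouring as soon as `G` has no isolated vertices: `(v, i)` sees every colour
`c ≠ i` at `(v, c)` and colour `i` at `(u, i)` for a neighbour `u` of `v`.
-/

section Coloring

variable {V W : Type*} {G : SimpleGraph V} {H : SimpleGraph W} {k : ℕ}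

lemma IsTotalDomaticColoring.isDomaticColoring {f : V → Fin k}
    (hf : IsTotalDomaticColoring G k f) : IsDomaticColoring G k f := fun v c =>
  let ⟨u, hu, hfu⟩ := hf v c
  ⟨u, Or.inr hu, hfu⟩

lemma IsDomaticColoring.isDominatingSet_colorClass {f : V → Fin k}
    (hf : IsDomaticColoring G k f) (c : Fin k) : IsDominatingSet G {v | f v = c} := fun v => by
  obtain ⟨u, hu | hu, hfu⟩ := hf v c
  · exact Or.inl (hu ▸ hfu)
  · exact Or.inr ⟨u, hfu, hu⟩

lemma IsDomaticColoring.comp_iso {f : W → Fin k} (hf : IsDomaticColoring H k f) (e : G ≃g H) :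
    IsDomaticColoring G k (f ∘ e) := fun v c => by
  obtain ⟨u, hu, hfu⟩ := hf (e v) c
  refine ⟨e.symm u, ?_, by simpa using hfu⟩
  rcases hu with rfl | hu
  · exact Or.inl (e.symm_apply_apply v)
  · exact Or.inr (e.map_adj_iff.mp (by simpa using hu))

lemma IsTotalDomaticColoring.comp_iso {f : W → Fin k} (hf : IsTotalDomaticColoring H k f)
    (e : G ≃g H) : IsTotalDomaticColoring G k (f ∘ e) := fun v c => by
  obtain ⟨u, hu, hfu⟩ := hf (e v) c
  exact ⟨e.symm u, e.map_adj_iff.mp (by simpa using hu), by simpa using hfu⟩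

lemma domaticNumber_congr (e : G ≃g H) : domaticNumber G = domaticNumber H := by
  unfold domaticNumber
  congr 1
  ext k
  exact ⟨fun ⟨f, hf⟩ => ⟨f ∘ e.symm, hf.comp_iso e.symm⟩, fun ⟨f, hf⟩ => ⟨f ∘ e, hf.comp_iso e⟩⟩

lemma totalDomaticNumber_congr (e : G ≃g H) : totalDomaticNumber G = totalDomaticNumber H := by
  unfold totalDomaticNumber
  congr 1
  ext k
  exact ⟨fun ⟨f, hf⟩ => ⟨f ∘ e.symm, hf.comp_iso e.symm⟩, fun ⟨f, hf⟩ => ⟨f ∘ e, hf.comp_iso e⟩⟩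

lemma IsDomaticColoring.mul_le_card [Fintype V] {f : V → Fin k} (hf : IsDomaticColoring G k f)
    {s : ℕ} (hs : ∀ D : Finset V, IsDominatingSet G ↑D → s ≤ #D) : k * s ≤ Fintype.card V := by
  classical
  calc k * s = ∑ _c : Fin k, s := by simp
    _ ≤ ∑ c : Fin k, #{v | f v = c} :=
      sum_le_sum fun c _ => hs _ (by simpa using hf.isDominatingSet_colorClass c)
    _ = Fintype.card V := (card_eq_sum_card_fiberwise fun v _ => mem_univ (f v)).symm

end Coloring

section BoxProdTop

variable {V W : Type*} [Fintype W] {G : SimpleGraph V}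

lemma isTotalDomaticColoring_boxProd_top_snd (hG : NoIsolated G) :
    IsTotalDomaticColoring (G □ (⊤ : SimpleGraph W)) (Fintype.card W)
      (Fintype.equivFin W ∘ Prod.snd) := by
  rintro ⟨v, i⟩ c
  set w := (Fintype.equivFin W).symm c
  by_cases hwi : w = i
  · obtain ⟨u, hu⟩ := hG v
    exact ⟨(u, i), boxProd_adj.mpr (Or.inl ⟨hu, rfl⟩), by simp [← hwi, w]⟩
  · exact ⟨(v, w), boxProd_adj.mpr (Or.inr ⟨Ne.symm hwi, rfl⟩), by simp [w]⟩

variable [Fintype V]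

lemma IsDominatingSet.min_card_le_of_boxProd_top {D : Finset (V × W)}
    (hD : IsDominatingSet (G □ (⊤ : SimpleGraph W)) ↑D) :
    min (Fintype.card V) (Fintype.card W) ≤ #D := by
  classical
  by_cases hcols : D.image Prod.snd = univ
  · calc min (Fintype.card V) (Fintype.card W) ≤ Fintype.card W := min_le_right _ _
      _ = #(D.image Prod.snd) := by rw [hcols, card_univ]
      _ ≤ #D := card_image_le
  obtain ⟨w, hw⟩ : ∃ w, w ∉ D.image Prod.snd := by
    simpa [eq_univ_iff_forall] using hcols
  have hrows : D.image Prod.fst = univ := by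
    refine eq_univ_of_forall fun v => ?_
    rcases hD (v, w) with hvw | ⟨u, hu, hadj⟩
    · exact absurd (mem_image_of_mem Prod.snd hvw) hw
    rcases boxProd_adj.mp hadj with ⟨-, rfl⟩ | ⟨-, rfl⟩
    · exact absurd (mem_image_of_mem Prod.snd hu) hw
    · exact mem_image_of_mem Prod.fst hu
  calc min (Fintype.card V) (Fintype.card W) ≤ Fintype.card V := min_le_left _ _
    _ = #(D.image Prod.fst) := by rw [hrows, card_univ]
    _ ≤ #D := card_image_le

lemma IsDomaticColoring.le_card_of_boxProd_top [Nonempty V] {k : ℕ} {f : V × W → Fin k}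
    (hf : IsDomaticColoring (G □ (⊤ : SimpleGraph W)) k f)
    (hVW : Fintype.card V ≤ Fintype.card W) : k ≤ Fintype.card W := by
  have hbound := hf.mul_le_card fun D hD => hD.min_card_le_of_boxProd_top
  rw [min_eq_left hVW, Fintype.card_prod, mul_comm (Fintype.card V)] at hbound
  exact le_of_mul_le_mul_right hbound Fintype.card_pos

theorem totalDomaticNumber_boxProd_top [Nonempty V] (hG : NoIsolated G)
    (hVW : Fintype.card V ≤ Fintype.card W) :
    totalDomaticNumber (G □ (⊤ : SimpleGraph W)) = Fintype.card W :=
  IsGreatest.csSup_eq ⟨⟨_, isTotalDomaticColoring_boxProd_top_snd hG⟩,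
    fun _ ⟨_, hf⟩ => hf.isDomaticColoring.le_card_of_boxProd_top hVW⟩

theorem domaticNumber_boxProd_top [Nonempty V] (hG : NoIsolated G)
    (hVW : Fintype.card V ≤ Fintype.card W) :
    domaticNumber (G □ (⊤ : SimpleGraph W)) = Fintype.card W :=
  IsGreatest.csSup_eq ⟨⟨_, (isTotalDomaticColoring_boxProd_top_snd hG).isDomaticColoring⟩,
    fun _ ⟨_, hf⟩ => hf.le_card_of_boxProd_top hVW⟩

end BoxProdTop

lemma noIsolated_top {V : Type*} [Nontrivial V] : NoIsolated (⊤ : SimpleGraph V) := fun v =>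
  let ⟨u, hu⟩ := exists_ne v
  ⟨u, (top_adj v u).mpr hu.symm⟩

theorem domatic_boxProd_completeGraph_general {V : Type*} [Fintype V] (G : SimpleGraph V)
    (m n : ℕ) (hm : Fintype.card V = m) (h2m : 2 ≤ m) (hmn : m ≤ n)
    (hG : NoIsolated G) :
    totalDomaticNumber (G □ (⊤ : SimpleGraph (Fin n))) = n ∧
    domaticNumber (G □ (⊤ : SimpleGraph (Fin n))) = n ∧
    (∀ m' n' : ℕ, 2 ≤ m' → 2 ≤ n' →
      totalDomaticNumber ((⊤ : SimpleGraph (Fin m')) □ (⊤ : SimpleGraph (Fin n'))) = max m' n' ∧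
      domaticNumber ((⊤ : SimpleGraph (Fin m')) □ (⊤ : SimpleGraph (Fin n'))) = max m' n') := by
  have : Nonempty V := Fintype.card_pos_iff.mp (by omega)
  have hVW : Fintype.card V ≤ Fintype.card (Fin n) := by simpa [hm] using hmn
  refine ⟨by simpa using totalDomaticNumber_boxProd_top hG hVW,
    by simpa using domaticNumber_boxProd_top hG hVW, fun m' n' h2m' h2n' => ?_⟩
  have : Nontrivial (Fin m') := Fin.nontrivial_iff_two_le.mpr h2m'
  have : Nontrivial (Fin n') := Fin.nontrivial_iff_two_le.mpr h2n'
  rcases le_total m' n' with h | h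
  · rw [max_eq_right h]
    have hVW : Fintype.card (Fin m') ≤ Fintype.card (Fin n') := by simpa using h
    exact ⟨by simpa using totalDomaticNumber_boxProd_top noIsolated_top hVW,
      by simpa using domaticNumber_boxProd_top noIsolated_top hVW⟩
  · rw [max_eq_left h, totalDomaticNumber_congr (boxProdComm _ _),
      domaticNumber_congr (boxProdComm _ _)]
    have hVW : Fintype.card (Fin n') ≤ Fintype.card (Fin m') := by simpa using h
    exact ⟨by simpa using totalDomaticNumber_boxProd_top noIsolated_top hVW,
      by simpa using domaticNumber_boxProd_top noIsolated_top hVW⟩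

theorem domatic_boxProd_completeGraph {V : Type*} [Fintype V] (G : SimpleGraph V)
    (m n : ℕ) (hm : Fintype.card V = m) (h2m : 2 ≤ m) (h2n : 2 ≤ n) (hmn : m ≤ n)
    (hG : NoIsolated G) :
    totalDomaticNumber (G □ (⊤ : SimpleGraph (Fin n))) = n ∧
    domaticNumber (G □ (⊤ : SimpleGraph (Fin n))) = n ∧
    (∀ m' n' : ℕ, 2 ≤ m' → 2 ≤ n' →
      totalDomaticNumber ((⊤ : SimpleGraph (Fin m')) □ (⊤ : SimpleGraph (Fin n'))) = max m' n' ∧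
      domaticNumber ((⊤ : SimpleGraph (Fin m')) □ (⊤ : SimpleGraph (Fin n'))) = max m' n') :=
  domatic_boxProd_completeGraph_general G m n hm h2m hmn hG
end

section
/- If G is a graph with d(G) = δ(G) + 1 (domatically full) and H is a graph with minimum degree 1, then d_t(G □ H) = d(G). -/
open SimpleGraph Finset

/-
A domatic coloring of `G`, pulled back along the projection `G □ H → G`, is a total domatic
coloring: `(v, w)` finds the colors of the proper neighbours of `v` at `(u, w)`, and its own
color at `(v, w')` for any neighbour `w'` of `w`. Conversely, the colors of a total domatic
coloring are carried by distinct open neighbours, so there are at most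
`deg (v, w) = δ(G) + 1` of them when `v` has minimum degree and `w` has degree one.
-/

section Colorings

variable {V W : Type*} {G : SimpleGraph V} {k : ℕ} {f : V → Fin k}

theorem IsTotalDomaticColoring.le_degree (hf : IsTotalDomaticColoring G k f) (v : V)
    [Fintype (G.neighborSet v)] : k ≤ G.degree v := by
  choose u hadj hcolor using hf v
  have hinj : Function.Injective fun c => (⟨u c, hadj c⟩ : G.neighborSet v) :=
    fun a b hab => by rw [← hcolor a, ← hcolor b, Subtype.mk.inj hab]
  simpa only [Fintype.card_fin, card_neighborSet_eq_degree] using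
    Fintype.card_le_of_injective _ hinj

theorem IsDomaticColoring.le_degree_add_one (hf : IsDomaticColoring G k f) (v : V)
    [Fintype (G.neighborSet v)] : k ≤ G.degree v + 1 := by
  classical
  choose u hmem hcolor using hf v
  have hinj : Set.InjOn u (univ : Finset (Fin k)) :=
    fun a _ b _ hab => by rw [← hcolor a, ← hcolor b, hab]
  have hmaps : ∀ c ∈ (univ : Finset (Fin k)), u c ∈ insert v (G.neighborFinset v) := by
    intro c _
    rcases hmem c with h | h <;> simp [h]
  calc k = (univ : Finset (Fin k)).card := by simp
    _ ≤ (insert v (G.neighborFinset v)).card := card_le_card_of_injOn u hmaps hinj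
    _ ≤ G.degree v + 1 := card_insert_le _ _

theorem IsDomaticColoring.comp_fst_boxProd (hf : IsDomaticColoring G k f)
    {H : SimpleGraph W} (hH : NoIsolated H) :
    IsTotalDomaticColoring (G □ H) k (f ∘ Prod.fst) := by
  rintro ⟨v, w⟩ c
  obtain ⟨u, rfl | hadj, hu⟩ := hf v c
  · obtain ⟨w', hw'⟩ := hH w
    exact ⟨(u, w'), boxProd_adj.2 (Or.inr ⟨hw', rfl⟩), hu⟩
  · exact ⟨(u, w), boxProd_adj.2 (Or.inl ⟨hadj, rfl⟩), hu⟩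

theorem domaticNumber_of_isEmpty [IsEmpty V] : domaticNumber G = 0 := by
  refine Nat.sSup_of_not_bddAbove (not_bddAbove_iff.2 fun n => ⟨n + 1, ?_, n.lt_succ_self⟩)
  exact ⟨isEmptyElim, isEmptyElim⟩

theorem exists_isDomaticColoring_domaticNumber [Nonempty V] [G.LocallyFinite] :
    ∃ f, IsDomaticColoring G (domaticNumber G) f :=
  Nat.sSup_mem (s := {k | ∃ f : V → Fin k, IsDomaticColoring G k f})
    ⟨1, fun _ => 0, fun v _ => ⟨v, Or.inl rfl, Subsingleton.elim _ _⟩⟩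
    ⟨_, fun _ ⟨_, hg⟩ => hg.le_degree_add_one (Classical.arbitrary V)⟩

theorem totalDomaticNumber_le_degree (v : V) [Fintype (G.neighborSet v)] :
    totalDomaticNumber G ≤ G.degree v :=
  csSup_le' fun _ ⟨_, hg⟩ => hg.le_degree v

theorem IsTotalDomaticColoring.le_totalDomaticNumber [Nonempty V] [G.LocallyFinite]
    (hf : IsTotalDomaticColoring G k f) : k ≤ totalDomaticNumber G :=
  le_csSup ⟨_, fun _ ⟨_, hg⟩ => hg.le_degree (Classical.arbitrary V)⟩ ⟨f, hf⟩

end Colorings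

theorem totalDomatic_boxProd_of_domatically_full_general {V W : Type*} [Fintype V] [Fintype W]
    (G : SimpleGraph V) (H : SimpleGraph W) [DecidableRel G.Adj] [DecidableRel H.Adj]
    (hH : NoIsolated H)
    (hfull : domaticNumber G = G.minDegree + 1) (hdel : H.minDegree = 1) :
    totalDomaticNumber (G □ H) = domaticNumber G := by
  rcases isEmpty_or_nonempty V with hV | hV
  · simp [domaticNumber_of_isEmpty] at hfull
  rcases isEmpty_or_nonempty W with hW | hW
  · simp [minDegree_of_subsingleton] at hdel
  obtain ⟨v, hv⟩ := G.exists_minimal_degree_vertex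
  obtain ⟨w, hw⟩ := H.exists_minimal_degree_vertex
  obtain ⟨f, hf⟩ := exists_isDomaticColoring_domaticNumber (G := G)
  apply le_antisymm
  · calc totalDomaticNumber (G □ H) ≤ (G □ H).degree (v, w) := totalDomaticNumber_le_degree _
      _ = G.minDegree + 1 := by rw [degree_boxProd, ← hv, ← hw, hdel]
      _ = domaticNumber G := hfull.symm
  · exact (hf.comp_fst_boxProd hH).le_totalDomaticNumber

theorem totalDomatic_boxProd_of_domatically_full {V W : Type*} [Fintype V] [Fintype W]
    (G : SimpleGraph V) (H : SimpleGraph W) [DecidableRel G.Adj] [DecidableRel H.Adj]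
    (hG : NoIsolated G) (hH : NoIsolated H)
    (hfull : domaticNumber G = G.minDegree + 1) (hdel : H.minDegree = 1) :
    totalDomaticNumber (G □ H) = domaticNumber G :=
  totalDomatic_boxProd_of_domatically_full_general G H hH hfull hdel
end
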